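/- arXiv:1409.1323 — 4 statements merged into one kernel-verified Lean document; each statement's English description precedes it below -/
import Mathlib

section
/- For any injection φ : S → {0,1}* from a finite set S into binary strings and any probability distribution p on S, one has Σ_{z∈S} p(z)·len(φ(z)) ≥ Σ_{z∈S} p(z)·log2(1/p(z)) - log2(log2(|S|)+2) - 2. -/
open Finset Real

private lemma count_len {S : Type*} [Fintype S] [DecidableEq (List Bool)]
    (φ : S → List Bool) (hφ : Function.Injective φ) (l : ℕ) :
    (Finset.univ.filter (fun z => (φ z).length = l)).card ≤ 2 ^ l := by
  classical
  have h := Finset.card_le_card_of_injOn φ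
    (t := Finset.univ.image (fun v : List.Vector Bool l => v.toList))
    (s := Finset.univ.filter (fun z => (φ z).length = l))
    (by
      intro z hz
      simp only [Finset.mem_coe, Finset.mem_filter] at hz
      exact Finset.mem_image.mpr ⟨⟨φ z, hz.2⟩, Finset.mem_univ _, rfl⟩)
    (fun a _ b _ h => hφ h)
  refine h.trans ?_
  calc (Finset.univ.image (fun v : List.Vector Bool l => v.toList)).card
      ≤ (Finset.univ : Finset (List.Vector Bool l)).card := Finset.card_image_le
    _ = 2 ^ l := by simp [card_vector]

private lemma kraft_sum_le {S : Type*} [Fintype S]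
    (φ : S → List Bool) (hφ : Function.Injective φ) :
    ∑ z, ((2:ℝ)⁻¹) ^ (φ z).length ≤ Nat.log 2 (Fintype.card S) + 2 := by
  classical
  set N := Fintype.card S with hN
  set m := Nat.log 2 N + 1 with hm
  have hsplit := Finset.sum_filter_add_sum_filter_not Finset.univ
    (fun z => (φ z).length < m) (fun z => ((2:ℝ)⁻¹) ^ (φ z).length)
  have h1 : ∑ z ∈ Finset.univ.filter (fun z => (φ z).length < m),
      ((2:ℝ)⁻¹) ^ (φ z).length ≤ m := by
    rw [← Finset.sum_fiberwise_of_maps_to (g := fun z => (φ z).length)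
      (t := Finset.range m) (fun z hz => Finset.mem_range.mpr (Finset.mem_filter.mp hz).2)]
    calc ∑ l ∈ Finset.range m, ∑ z ∈ (Finset.univ.filter
          (fun z => (φ z).length < m)).filter (fun z => (φ z).length = l),
            ((2:ℝ)⁻¹) ^ (φ z).length
        ≤ ∑ l ∈ Finset.range m, (1:ℝ) := by
          apply Finset.sum_le_sum
          intro l _
          have hsub : (Finset.univ.filter (fun z => (φ z).length < m)).filter
              (fun z => (φ z).length = l) ⊆ Finset.univ.filter (fun z => (φ z).length = l) := by
            intro z hz
            simp only [Finset.mem_filter] at hz ⊢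
            exact ⟨Finset.mem_univ _, hz.2⟩
          calc ∑ z ∈ (Finset.univ.filter (fun z => (φ z).length < m)).filter
                (fun z => (φ z).length = l), ((2:ℝ)⁻¹) ^ (φ z).length
              = ∑ z ∈ (Finset.univ.filter (fun z => (φ z).length < m)).filter
                (fun z => (φ z).length = l), ((2:ℝ)⁻¹) ^ l := by
                apply Finset.sum_congr rfl
                intro z hz
                rw [(Finset.mem_filter.mp hz).2]
            _ = ((Finset.univ.filter (fun z => (φ z).length < m)).filter
                (fun z => (φ z).length = l)).card * ((2:ℝ)⁻¹) ^ l := by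
                rw [Finset.sum_const, nsmul_eq_mul]
            _ ≤ (2:ℝ) ^ l * ((2:ℝ)⁻¹) ^ l := by
                apply mul_le_mul_of_nonneg_right _ (by positivity)
                have := (Finset.card_le_card hsub).trans (count_len φ hφ l)
                exact_mod_cast this
            _ = 1 := by rw [← mul_pow]; norm_num
      _ = m := by simp
  have hNm : (N:ℝ) < 2 ^ m := by
    exact_mod_cast Nat.lt_pow_succ_log_self (by norm_num) N
  have h2 : ∑ z ∈ Finset.univ.filter (fun z => ¬ (φ z).length < m),
      ((2:ℝ)⁻¹) ^ (φ z).length ≤ 1 := by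
    have hcard : (Finset.univ.filter (fun z => ¬ (φ z).length < m)).card ≤ N := by
      simpa [hN] using Finset.card_filter_le Finset.univ (fun z => ¬ (φ z).length < m)
    calc ∑ z ∈ Finset.univ.filter (fun z => ¬ (φ z).length < m),
          ((2:ℝ)⁻¹) ^ (φ z).length
        ≤ ∑ z ∈ Finset.univ.filter (fun z => ¬ (φ z).length < m), ((2:ℝ)⁻¹) ^ m := by
          apply Finset.sum_le_sum
          intro z hz
          have hlen : m ≤ (φ z).length := Nat.le_of_not_lt (Finset.mem_filter.mp hz).2
          exact pow_le_pow_of_le_one (by norm_num) (by norm_num) hlen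
      _ = (Finset.univ.filter (fun z => ¬ (φ z).length < m)).card * ((2:ℝ)⁻¹) ^ m := by
          rw [Finset.sum_const, nsmul_eq_mul]
      _ ≤ (N:ℝ) * ((2:ℝ)⁻¹) ^ m := by
          apply mul_le_mul_of_nonneg_right _ (by positivity)
          exact_mod_cast hcard
      _ ≤ 1 := by
          rw [inv_pow]
          rw [mul_inv_le_iff₀ (by positivity), one_mul]
          exact hNm.le
  have := hsplit
  have hmN : (m:ℝ) = Nat.log 2 N + 1 := by exact_mod_cast rfl
  nlinarith [h1, h2]

/-- Kraft-type lower bound for one-to-one (not necessarily prefix-free) binary codes: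
the expected codeword length is at least the entropy minus `log₂(log₂|S| + 2) + 2`. -/
theorem stmt0 {S : Type*} [Fintype S] [Nonempty S]
    (p : S → ℝ) (hp : ∀ z, 0 ≤ p z) (hsum : ∑ z, p z = 1)
    (φ : S → List Bool) (hφ : Function.Injective φ) :
    ∑ z, p z * ((φ z).length : ℝ) ≥
      ∑ z, p z * Real.logb 2 (1 / p z)
        - Real.logb 2 (Real.logb 2 (Fintype.card S) + 2) - 2 := by
  classical
  set N := Fintype.card S with hN
  have hN1 : 1 ≤ N := Fintype.card_pos
  set q : S → ℝ := fun z => ((2:ℝ)⁻¹) ^ (φ z).length with hq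
  have hqpos : ∀ z, 0 < q z := fun z => by positivity
  set T : Finset S := Finset.univ.filter (fun z => 0 < p z) with hT
  have hpT : ∀ z ∈ T, 0 < p z := fun z hz => (Finset.mem_filter.mp hz).2
  have hzero : ∀ z, z ∉ T → p z = 0 := by
    intro z hz
    by_contra h
    exact hz (Finset.mem_filter.mpr ⟨Finset.mem_univ z,
      lt_of_le_of_ne (hp z) (Ne.symm h)⟩)
  have hsumT : ∑ z ∈ T, p z = 1 :=
    (Finset.sum_subset (Finset.subset_univ T) (fun z _ hz => hzero z hz)).trans hsum
  have hTne : T.Nonempty := by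
    by_contra h
    rw [Finset.not_nonempty_iff_eq_empty] at h
    rw [h, Finset.sum_empty] at hsumT
    norm_num at hsumT
  set c : ℝ := ∑ z ∈ T, q z with hc
  have hcpos : 0 < c := Finset.sum_pos (fun z _ => hqpos z) hTne
  -- Jensen / Gibbs inequality
  have hjensen : ∑ z ∈ T, p z * Real.log (q z / p z) ≤ Real.log c := by
    have h := (strictConcaveOn_log_Ioi.concaveOn).le_map_sum
      (t := T) (w := p) (p := fun z => q z / p z)
      (fun z hz => (hpT z hz).le) hsumT
      (fun z hz => Set.mem_Ioi.mpr (div_pos (hqpos z) (hpT z hz)))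
    simp only [smul_eq_mul] at h
    have heq : ∑ z ∈ T, p z * (q z / p z) = c := by
      rw [hc]
      apply Finset.sum_congr rfl
      intro z hz
      rw [mul_div_assoc'] 
      exact mul_div_cancel_left₀ _ (hpT z hz).ne'
    rwa [heq] at h
  have hlog2 : (0:ℝ) < Real.log 2 := Real.log_pos (by norm_num)
  have hjensen2 : ∑ z ∈ T, p z * Real.logb 2 (q z / p z) ≤ Real.logb 2 c := by
    have heq : ∑ z ∈ T, p z * Real.logb 2 (q z / p z)
        = (∑ z ∈ T, p z * Real.log (q z / p z)) / Real.log 2 := by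
      rw [Finset.sum_div]
      apply Finset.sum_congr rfl
      intros
      rw [Real.logb]
      ring
    rw [heq, Real.logb]
    gcongr
  have hqlog : ∀ z, Real.logb 2 (q z) = -((φ z).length : ℝ) := by
    intro z
    rw [hq]
    rw [Real.logb_pow, Real.logb_inv, Real.logb_self_eq_one (b := 2) (by norm_num)]
    ring
  have hdecomp : ∀ z ∈ T, Real.logb 2 (q z / p z)
      = Real.logb 2 (1 / p z) - ((φ z).length : ℝ) := by
    intro z hz
    rw [Real.logb_div (hqpos z).ne' (hpT z hz).ne', hqlog z, one_div, Real.logb_inv]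
    ring
  have key : ∑ z ∈ T, p z * Real.logb 2 (1 / p z) - ∑ z ∈ T, p z * ((φ z).length:ℝ)
      ≤ Real.logb 2 c := by
    have : ∑ z ∈ T, p z * Real.logb 2 (q z / p z)
        = ∑ z ∈ T, (p z * Real.logb 2 (1 / p z) - p z * ((φ z).length:ℝ)) := by
      apply Finset.sum_congr rfl
      intro z hz
      rw [hdecomp z hz]
      ring
    rw [this, Finset.sum_sub_distrib] at hjensen2
    exact hjensen2
  -- bound on c
  have hcb : c ≤ (Nat.log 2 N : ℝ) + 2 := by
    calc c ≤ ∑ z, q z :=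
          Finset.sum_le_sum_of_subset_of_nonneg (Finset.subset_univ T) (fun z _ _ => (hqpos z).le)
      _ ≤ (Nat.log 2 N : ℝ) + 2 := kraft_sum_le φ hφ
  have hlogN : (0:ℝ) ≤ Real.logb 2 N := by
    apply Real.logb_nonneg (by norm_num)
    exact_mod_cast hN1
  have hlogc : Real.logb 2 c ≤ Real.logb 2 (Real.logb 2 N + 2) := by
    calc Real.logb 2 c ≤ Real.logb 2 ((Nat.log 2 N : ℝ) + 2) :=
        Real.logb_le_logb_of_le (by norm_num) hcpos hcb
      _ ≤ Real.logb 2 (Real.logb 2 N + 2) := by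
        apply Real.logb_le_logb_of_le (by norm_num) (by positivity)
        have := Real.natLog_le_logb N 2
        push_cast at this
        linarith
  -- convert sums over univ to sums over T
  have e1 : ∑ z, p z * ((φ z).length:ℝ) = ∑ z ∈ T, p z * ((φ z).length:ℝ) :=
    (Finset.sum_subset (Finset.subset_univ T)
      (fun z _ hz => by rw [hzero z hz]; ring)).symm
  have e2 : ∑ z, p z * Real.logb 2 (1 / p z) = ∑ z ∈ T, p z * Real.logb 2 (1 / p z) :=
    (Finset.sum_subset (Finset.subset_univ T)
      (fun z _ hz => by rw [hzero z hz]; ring)).symm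
  rw [ge_iff_le, e1, e2]
  linarith
end

section
/- For any injective function φ from a finite set S into binary strings {0,1}*, and any probability mass function p on S, the expected codeword length satisfies Σ_{z∈S} p(z)·len(φ(z)) ≥ Σ_{z∈S} p(z)·log₂(1/p(z)) − log₂(log₂(|S|+1)+1) − 1. -/
/-!
Read each codeword as a binary numeral with an extra leading `1`: this injects `S` into the
positive integers via some `g` with `len φ(z) ≥ log₂ g(z) - 1`. Gibbs' inequality against the
subnormalised weights `1 / g` gives `E[log₂ g] ≥ H(p) - log₂ ∑ 1 / g(z)`, and by injectivity
`∑ 1 / g(z)` is at most the harmonic number `H_|S| ≤ log₂ (|S| + 1) + 1`.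
-/

open Finset Real

/-- `[b₀, …, bₖ₋₁] ↦` the binary numeral `1 bₖ₋₁ … b₀`. -/
def binaryIndex (l : List Bool) : ℕ := l.foldr Nat.bit 1

@[simp] lemma binaryIndex_nil : binaryIndex [] = 1 := rfl

@[simp] lemma binaryIndex_cons (b : Bool) (l : List Bool) :
    binaryIndex (b :: l) = Nat.bit b (binaryIndex l) := rfl

lemma binaryIndex_ne_zero (l : List Bool) : binaryIndex l ≠ 0 := by
  induction l with
  | nil => simp
  | cons b l ih => simp [Nat.bit_eq_zero_iff, ih]

lemma binaryIndex_lt_two_pow (l : List Bool) : binaryIndex l < 2 ^ (l.length + 1) := by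
  induction l with
  | nil => simp
  | cons b l ih => simpa using ih

lemma binaryIndex_injective : Function.Injective binaryIndex := by
  intro l
  induction l with
  | nil =>
    rintro (_ | ⟨b, l⟩) h
    · rfl
    · simp only [binaryIndex_cons, binaryIndex_nil, Nat.bit_val] at h
      have := binaryIndex_ne_zero l
      omega
  | cons b l ih =>
    rintro (_ | ⟨b', l'⟩) h
    · simp only [binaryIndex_cons, binaryIndex_nil, Nat.bit_val] at h
      have := binaryIndex_ne_zero l
      omega
    · simp only [binaryIndex_cons, Nat.bit_val] at h
      have hl : binaryIndex l = binaryIndex l' := by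
        have := b.toNat_le
        have := b'.toNat_le
        omega
      obtain rfl := ih hl
      cases b <;> cases b' <;> simp_all

lemma logb_binaryIndex_le (l : List Bool) : logb 2 (binaryIndex l) ≤ l.length + 1 := by
  have hpos : (0 : ℝ) < binaryIndex l := by
    exact_mod_cast Nat.pos_of_ne_zero (binaryIndex_ne_zero l)
  rw [logb_le_iff_le_rpow one_lt_two hpos]
  exact_mod_cast (binaryIndex_lt_two_pow l).le

lemma sum_inv_le_harmonic_card (T : Finset ℕ) (hT : 0 ∉ T) :
    ∑ k ∈ T, (k : ℝ)⁻¹ ≤ harmonic #T := by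
  induction T using Finset.induction_on_max with
  | empty => simp
  | insert a T hlt ih =>
    have haT : a ∉ T := fun h => lt_irrefl a (hlt a h)
    have h0 : 0 ∉ T := fun h => hT (mem_insert_of_mem h)
    have ha : a ≠ 0 := fun h => hT (h ▸ mem_insert_self a T)
    have hcard : #T + 1 ≤ a := by
      have hsub : T ⊆ Ico 1 a := fun k hk =>
        mem_Ico.mpr ⟨Nat.one_le_iff_ne_zero.mpr (ne_of_mem_of_not_mem hk h0), hlt k hk⟩
      have hle := card_le_card hsub
      rw [Nat.card_Ico] at hle
      omega
    rw [sum_insert haT, card_insert_of_notMem haT, harmonic_succ, add_comm]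
    push_cast
    gcongr
    · exact ih h0
    · exact_mod_cast hcard

lemma sum_inv_le_harmonic_of_injective {ι : Type*} [Fintype ι] {g : ι → ℕ}
    (hg : Function.Injective g) (hg0 : ∀ i, g i ≠ 0) :
    ∑ i, (g i : ℝ)⁻¹ ≤ harmonic (Fintype.card ι) := by
  classical
  calc ∑ i, (g i : ℝ)⁻¹ = ∑ k ∈ univ.image g, (k : ℝ)⁻¹ :=
        (sum_image (f := fun k : ℕ => (k : ℝ)⁻¹) hg.injOn).symm
    _ ≤ harmonic #(univ.image g) :=
        sum_inv_le_harmonic_card _ fun h => by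
          obtain ⟨i, -, hi⟩ := mem_image.mp h
          exact hg0 i hi
    _ = harmonic (Fintype.card ι) := by rw [card_image_of_injective _ hg, card_univ]

lemma harmonic_le_logb_two_add_one (n : ℕ) : (harmonic n : ℝ) ≤ logb 2 (n + 1) + 1 := by
  have hn : (1 : ℝ) ≤ n + 1 := by linarith [n.cast_nonneg (α := ℝ)]
  have hlog_two : log 2 ≤ 1 := by linarith [log_two_lt_d9]
  have hlog_le_logb : log (n + 1) ≤ logb 2 (n + 1) := by
    rw [logb, le_div_iff₀ (log_pos one_lt_two)]
    nlinarith [log_nonneg hn]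
  have hlog_mono : log n ≤ log (n + 1) := by
    rcases n.eq_zero_or_pos with rfl | hpos
    · simp
    · exact log_le_log (by positivity) (by linarith)
  linarith [harmonic_le_one_add_log n]

theorem sum_mul_log_div_le_log_sum {ι : Type*} {s : Finset ι} {p q : ι → ℝ}
    (hp : ∀ i ∈ s, 0 ≤ p i) (hp1 : ∑ i ∈ s, p i = 1) (hq : ∀ i ∈ s, 0 < q i) :
    ∑ i ∈ s, p i * log (q i / p i) ≤ log (∑ i ∈ s, q i) := by
  classical
  set t := s.filter (p · ≠ 0)
  have hts : t ⊆ s := filter_subset _ s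
  have htp : ∀ i ∈ t, 0 < p i := fun i hi =>
    (hp i (hts hi)).lt_of_ne' (mem_filter.mp hi).2
  have ht1 : ∑ i ∈ t, p i = 1 := by rw [sum_filter_ne_zero, hp1]
  have ht : t.Nonempty := nonempty_of_sum_ne_zero (by rw [ht1]; exact one_ne_zero)
  calc ∑ i ∈ s, p i * log (q i / p i) = ∑ i ∈ t, p i • log (q i / p i) := by
        rw [sum_filter_of_ne fun i _ h => left_ne_zero_of_mul h]; rfl
    _ ≤ log (∑ i ∈ t, p i • (q i / p i)) :=
        strictConcaveOn_log_Ioi.concaveOn.le_map_sum (fun i hi => (htp i hi).le) ht1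
          fun i hi => div_pos (hq i (hts hi)) (htp i hi)
    _ = log (∑ i ∈ t, q i) := by
        congr 1
        exact sum_congr rfl fun i hi => mul_div_cancel₀ _ (htp i hi).ne'
    _ ≤ log (∑ i ∈ s, q i) :=
        log_le_log (sum_pos (fun i hi => hq i (hts hi)) ht)
          (sum_le_sum_of_subset_of_nonneg hts fun i hi _ => (hq i hi).le)

theorem sum_mul_logb_one_div_le {ι : Type*} {s : Finset ι} {p q : ι → ℝ} {b : ℝ} (hb : 1 < b)
    (hp : ∀ i ∈ s, 0 ≤ p i) (hp1 : ∑ i ∈ s, p i = 1) (hq : ∀ i ∈ s, 0 < q i) :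
    ∑ i ∈ s, p i * logb b (1 / p i) ≤
      ∑ i ∈ s, p i * logb b (1 / q i) + logb b (∑ i ∈ s, q i) := by
  have hterm : ∀ i ∈ s, p i * logb b (1 / p i) =
      p i * logb b (1 / q i) + p i * log (q i / p i) / log b := by
    intro i hi
    rcases (hp i hi).eq_or_lt with h | h
    · simp [← h]
    · rw [logb, logb, log_div (hq i hi).ne' h.ne', one_div, one_div, log_inv, log_inv]
      ring
  rw [sum_congr rfl hterm, sum_add_distrib, ← sum_div]
  gcongr
  exact div_le_div_of_nonneg_right (sum_mul_log_div_le_log_sum hp hp1 hq) (log_pos hb).le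

/-- One-to-one codes beat the entropy by at most an additive log-log term:
for any injective binary encoding of a finite set,
`E[len] ≥ H(p) − log₂(log₂(|S|+1)+1) − 1`. -/
theorem stmt1 {S : Type*} [Fintype S] [Nonempty S]
    (p : S → ℝ) (hp : ∀ z, 0 ≤ p z) (hsum : ∑ z, p z = 1)
    (φ : S → List Bool) (hφ : Function.Injective φ) :
    ∑ z, p z * ((φ z).length : ℝ) ≥
      ∑ z, p z * Real.logb 2 (1 / p z)
        - Real.logb 2 (Real.logb 2 ((Fintype.card S : ℝ) + 1) + 1) - 1 := by
  set g : S → ℕ := fun z => binaryIndex (φ z)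
  have hg0 : ∀ z, g z ≠ 0 := fun z => binaryIndex_ne_zero (φ z)
  have hlen : ∑ z, p z * logb 2 (g z) - 1 ≤ ∑ z, p z * (φ z).length := by
    calc ∑ z, p z * logb 2 (g z) - 1 = ∑ z, p z * (logb 2 (g z) - 1) := by
          simp only [mul_sub, mul_one, sum_sub_distrib, hsum]
      _ ≤ ∑ z, p z * (φ z).length := sum_le_sum fun z _ =>
          mul_le_mul_of_nonneg_left (by linarith [logb_binaryIndex_le (φ z)]) (hp z)
  have hgibbs := sum_mul_logb_one_div_le (q := fun z => (g z : ℝ)⁻¹) one_lt_two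
    (fun z _ => hp z) hsum fun z _ => by have := hg0 z; positivity
  have hharmonic : ∑ z, (g z : ℝ)⁻¹ ≤ logb 2 (Fintype.card S + 1) + 1 :=
    (sum_inv_le_harmonic_of_injective (binaryIndex_injective.comp hφ) hg0).trans
      (harmonic_le_logb_two_add_one _)
  have hlog := logb_le_logb_of_le one_lt_two
    (sum_pos (fun z _ => by have := hg0 z; positivity) univ_nonempty) hharmonic
  simp only [one_div, inv_inv] at hgibbs ⊢
  linarith
end

section
/- The total length of all distinct strings over an alphabet of size A of length at most L is Σ_{j=1}^{L} j·A^j, and consequently any collection of c pairwise distinct nonempty strings over Fin A whose total length is n satisfies n ≥ c·(log_A(c)/2 − 1) for c ≥ A², i.e., c·log₂ c ≤ 2n·log₂ A + c·(2·log₂ A). -/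
/-! Fewer than `A ^ k` distinct strings have length `< k`, so `k * c ≤ n + k * A ^ k` for every
`k`. For `k = ⌊log_A c⌋ - 1` we have `2 * A ^ k ≤ c`, hence `k * c ≤ 2 * n`, while `c < A ^ (k + 2)`
bounds `log_A c` by `k + 2`. -/

open Finset

namespace Finset

variable {α : Type*} [Fintype α]

theorem card_filter_length_lt_lt (hα : 2 ≤ Fintype.card α) (s : Finset (List α)) (k : ℕ) :
    #{l ∈ s | l.length < k} < Fintype.card α ^ k := by
  calc #{l ∈ s | l.length < k}
      = ∑ j ∈ range k, #{l ∈ {l ∈ s | l.length < k} | l.length = j} :=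
        card_eq_sum_card_fiberwise fun l hl ↦ mem_range.2 (mem_filter.1 hl).2
    _ ≤ ∑ j ∈ range k, Fintype.card α ^ j := sum_le_sum fun _ _ ↦ card_filter_length_eq_le
    _ < Fintype.card α ^ k := Nat.geomSum_lt hα fun _ ↦ mem_range.1

theorem mul_card_le_sum_length_add (hα : 2 ≤ Fintype.card α) (s : Finset (List α)) (k : ℕ) :
    k * #s ≤ ∑ l ∈ s, l.length + k * Fintype.card α ^ k := by
  have hlong : k * #{l ∈ s | ¬ l.length < k} ≤ ∑ l ∈ s, l.length :=
    calc k * #{l ∈ s | ¬ l.length < k}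
        ≤ ∑ l ∈ s with ¬ l.length < k, l.length := by
          rw [mul_comm, ← smul_eq_mul]
          exact card_nsmul_le_sum _ _ _ fun l hl ↦ not_lt.1 (mem_filter.1 hl).2
      _ ≤ ∑ l ∈ s, l.length := sum_le_sum_of_subset (filter_subset _ _)
  have hshort := (card_filter_length_lt_lt hα s k).le
  rw [← card_filter_add_card_filter_not (fun l : List α ↦ l.length < k) (s := s), mul_add]
  have := Nat.mul_le_mul_left k hshort
  omega

end Finset

theorem exists_mul_le_two_mul_and_lt_pow {A c n : ℕ} (hA : 2 ≤ A)
    (hcount : ∀ k, k * c ≤ n + k * A ^ k) : ∃ k, k * c ≤ 2 * n ∧ c < A ^ (k + 2) := by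
  refine ⟨Nat.log A c - 1, ?_, ?_⟩
  · set k := Nat.log A c - 1
    rcases Nat.eq_zero_or_pos k with hk | hk
    · simp [hk]
    have hc : c ≠ 0 := by rintro rfl; simp [k] at hk
    have hpow : A ^ (k + 1) ≤ c := by
      rw [show k + 1 = Nat.log A c by omega]
      exact Nat.pow_log_le_self A hc
    have h2pow : 2 * A ^ k ≤ c := by
      rw [pow_succ] at hpow
      nlinarith
    nlinarith [hcount k]
  · calc c < A ^ (Nat.log A c + 1) := Nat.lt_pow_succ_log_self hA c
      _ ≤ A ^ (Nat.log A c - 1 + 2) := Nat.pow_le_pow_right (by omega) (by omega)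

theorem mul_logb_le_of_lt_pow {A c n k : ℕ} (hA : 1 ≤ A) (hc : c < A ^ (k + 2))
    (hkc : k * c ≤ 2 * n) :
    (c : ℝ) * Real.logb 2 c ≤ 2 * n * Real.logb 2 A + c * (2 * Real.logb 2 A) := by
  have hlogA : 0 ≤ Real.logb 2 A :=
    Real.logb_nonneg one_lt_two (by exact_mod_cast hA)
  rcases Nat.eq_zero_or_pos c with rfl | hc0
  · simpa using mul_nonneg (by positivity : (0 : ℝ) ≤ 2 * n) hlogA
  have hlogc : Real.logb 2 c ≤ (k + 2) * Real.logb 2 A := by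
    calc Real.logb 2 c ≤ Real.logb 2 ((A : ℝ) ^ (k + 2)) :=
          Real.logb_le_logb_of_le one_lt_two (by exact_mod_cast hc0) (by exact_mod_cast hc.le)
      _ = (k + 2) * Real.logb 2 A := by rw [Real.logb_pow]; push_cast; ring
  have hkcR : (k : ℝ) * c ≤ 2 * n := by exact_mod_cast hkc
  calc (c : ℝ) * Real.logb 2 c ≤ c * ((k + 2) * Real.logb 2 A) := by gcongr
    _ = (k * c) * Real.logb 2 A + c * (2 * Real.logb 2 A) := by ring
    _ ≤ 2 * n * Real.logb 2 A + c * (2 * Real.logb 2 A) := by gcongr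

theorem stmt3_general (A : ℕ) (hA : 2 ≤ A) (L : ℕ)
    (ps : List (List (Fin A))) (hdist : ps.Pairwise (· ≠ ·)) :
    (∑ j ∈ Finset.Icc 1 L, (Fintype.card (Fin j → Fin A)) * j
        = ∑ j ∈ Finset.Icc 1 L, j * A ^ j) ∧
    (ps.length : ℝ) * Real.logb 2 (ps.length) ≤
      2 * ((ps.flatten).length : ℝ) * Real.logb 2 A + (ps.length : ℝ) * (2 * Real.logb 2 A) := by
  refine ⟨sum_congr rfl fun j _ ↦ by simp [mul_comm], ?_⟩
  have hnodup : ps.Nodup := List.nodup_iff_pairwise_ne.2 hdist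
  have hcount (k : ℕ) : k * ps.length ≤ ps.flatten.length + k * A ^ k := by
    simpa [List.toFinset_card_of_nodup hnodup, List.sum_toFinset _ hnodup, List.length_flatten]
      using mul_card_le_sum_length_add (by simpa using hA) ps.toFinset k
  obtain ⟨k, hkc, hc⟩ := exists_mul_le_two_mul_and_lt_pow hA hcount
  exact mul_logb_le_of_lt_pow (by omega) hc hkc

/-- Counting lemma underlying the Lempel–Ziv complexity bound: the total length of all
distinct strings over `Fin A` of length at most `L` is `∑_{j=1}^{L} j·A^j`, and any
collection of `c` pairwise distinct nonempty strings of total length `n` satisfies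
`c·log₂ c ≤ 2n·log₂ A + c·(2·log₂ A)`. -/
theorem stmt3 (A : ℕ) (hA : 2 ≤ A) (L : ℕ)
    (ps : List (List (Fin A))) (hne : ∀ l ∈ ps, l ≠ []) (hdist : ps.Pairwise (· ≠ ·)) :
    (∑ j ∈ Finset.Icc 1 L, (Fintype.card (Fin j → Fin A)) * j
        = ∑ j ∈ Finset.Icc 1 L, j * A ^ j) ∧
    (ps.length : ℝ) * Real.logb 2 (ps.length) ≤
      2 * ((ps.flatten).length : ℝ) * Real.logb 2 A + (ps.length : ℝ) * (2 * Real.logb 2 A) :=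
  stmt3_general A hA L ps hdist
end

section
/- Kraft-type converse for finite-state IL encoders on a single state pair: given s states and n input symbols, if an IL finite-state encoder produces, for phrases sharing the same start state s_i and end state s_o, pairwise distinct binary codewords with lengths L_j, then for the empirical distribution p(·|s_i,s_o) of those phrases, Σ_j p(Z_j|s_i,s_o)·L(Z_j|s_i) ≥ Σ_j p(Z_j|s_i,s_o)·log₂(1/p(Z_j|s_i,s_o)) − O(log c), where c is the total number of phrases. -/
/-!
Let `T` be the type class of `count`: all arrangements `Fin m → S` in which each `z` occurs
`count z` times. Every arrangement in `T` is encoded by a string of the same length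
`N = ∑ z, count z * L z`, so injectivity gives `#T ≤ 2 ^ N`. Permuting one arrangement shows
`#T ≥ m! / ∏ z, (count z)!`, and the method-of-types estimate
`m ^ m ≤ (m + 1) ^ #S * (m! / ∏ z, (count z)!) * ∏ z, count z ^ count z` turns this into
`m * H(p) ≤ N + #S * log₂ (m + 1)` after taking `log₂`.
-/

open Finset
open scoped Nat

theorem Nat.factorial_mul_pow_le_factorial_mul_pow (c d : ℕ) : c ! * c ^ d ≤ d ! * c ^ c := by
  rcases le_total d c with h | h
  · calc c ! * c ^ d = d ! * c.descFactorial (c - d) * c ^ d := by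
          rw [← factorial_mul_descFactorial (Nat.sub_le c d), Nat.sub_sub_self h]
      _ ≤ d ! * c ^ (c - d) * c ^ d := by gcongr; exact descFactorial_le_pow c _
      _ = d ! * c ^ c := by rw [mul_assoc, ← pow_add, Nat.sub_add_cancel h]
  · calc c ! * c ^ d = c ! * c ^ (d - c) * c ^ c := by
          rw [mul_assoc, ← pow_add, Nat.sub_add_cancel h]
      _ ≤ d ! * c ^ c := by gcongr; exact factorial_mul_pow_sub_le_factorial h

theorem Nat.multinomial_mul_prod_pow_le {ι : Type*} (s : Finset ι) (c d : ι → ℕ)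
    (h : ∑ i ∈ s, d i = ∑ i ∈ s, c i) :
    multinomial s d * ∏ i ∈ s, c i ^ d i ≤ multinomial s c * ∏ i ∈ s, c i ^ c i := by
  set n := ∑ i ∈ s, c i
  have hd : multinomial s d * ∏ i ∈ s, (d i)! = n ! := by
    rw [mul_comm, multinomial_spec, h]
  have hc : multinomial s c * ∏ i ∈ s, (c i)! = n ! := by
    rw [mul_comm, multinomial_spec]
  have key : (∏ i ∈ s, (c i)!) * ∏ i ∈ s, c i ^ d i ≤ (∏ i ∈ s, (d i)!) * ∏ i ∈ s, c i ^ c i := by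
    simp only [← prod_mul_distrib]
    exact prod_le_prod' fun i _ ↦ factorial_mul_pow_le_factorial_mul_pow (c i) (d i)
  have hpos : 0 < (∏ i ∈ s, (d i)!) * ∏ i ∈ s, (c i)! := by positivity
  refine Nat.le_of_mul_le_mul_left ?_ hpos
  calc (∏ i ∈ s, (d i)!) * (∏ i ∈ s, (c i)!) * (multinomial s d * ∏ i ∈ s, c i ^ d i)
      = (multinomial s d * ∏ i ∈ s, (d i)!) * ((∏ i ∈ s, (c i)!) * ∏ i ∈ s, c i ^ d i) := by ring
    _ ≤ n ! * ((∏ i ∈ s, (d i)!) * ∏ i ∈ s, c i ^ c i) := by rw [hd]; gcongr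
    _ = (∏ i ∈ s, (d i)!) * (∏ i ∈ s, (c i)!) * (multinomial s c * ∏ i ∈ s, c i ^ c i) := by
        rw [← hc]; ring

theorem Finset.card_piAntidiag_univ_le {ι : Type*} [Fintype ι] [DecidableEq ι] (n : ℕ) :
    #(piAntidiag (univ : Finset ι) n) ≤ (n + 1) ^ Fintype.card ι := by
  calc #(piAntidiag (univ : Finset ι) n)
      ≤ #(Fintype.piFinset fun _ : ι ↦ range (n + 1)) := by
        refine card_le_card fun d hd ↦ Fintype.mem_piFinset.2 fun i ↦ mem_range.2 ?_
        rw [mem_piAntidiag] at hd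
        exact Nat.lt_succ_of_le (hd.1 ▸ single_le_sum (fun _ _ ↦ Nat.zero_le _) (mem_univ i))
    _ = (n + 1) ^ Fintype.card ι := by simp

theorem Nat.sum_pow_sum_le_mul_multinomial {ι : Type*} [Fintype ι] [DecidableEq ι] (c : ι → ℕ) :
    (∑ i, c i) ^ (∑ i, c i) ≤
      (∑ i, c i + 1) ^ Fintype.card ι * (multinomial univ c * ∏ i, c i ^ c i) := by
  set n := ∑ i, c i
  -- Multinomial expansion of `(∑ i, c i) ^ n`: its largest term is the one at `d = c`.
  calc n ^ n = ∑ d ∈ piAntidiag univ n, multinomial univ d * ∏ i, c i ^ d i := by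
        simpa using sum_pow_eq_sum_piAntidiag univ c n
    _ ≤ ∑ _d ∈ piAntidiag univ n, multinomial univ c * ∏ i, c i ^ c i :=
        sum_le_sum fun d hd ↦ multinomial_mul_prod_pow_le univ c d (mem_piAntidiag.1 hd).1
    _ ≤ (n + 1) ^ Fintype.card ι * (multinomial univ c * ∏ i, c i ^ c i) := by
        rw [sum_const, smul_eq_mul]; gcongr; exact card_piAntidiag_univ_le n

theorem card_filter_comp_perm_eq {α S : Type*} [Fintype α] [DecidableEq α]
    [DecidableEq S] (f : α → S) (τ : Equiv.Perm α) :
    #{σ : Equiv.Perm α | f ∘ σ = f ∘ τ} = Fintype.card {σ : Equiv.Perm α // f ∘ σ = f} := by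
  rw [← Fintype.card_subtype]
  refine Fintype.card_congr ((Equiv.mulRight τ⁻¹).subtypeEquiv fun σ ↦ ?_)
  simp [Equiv.Perm.coe_mul, ← Function.comp_assoc, Equiv.comp_symm_eq]

section TypeClass

variable {S : Type*} [DecidableEq S]

/-- The type class of `count` in the sense of the method of types. -/
def typeClass (α : Type*) [Fintype α] [DecidableEq α] [Fintype S] (count : S → ℕ) :
    Finset (α → S) :=
  {f | ∀ z, #{i | f i = z} = count z}

variable {α : Type*} [Fintype α] [DecidableEq α] [Fintype S] {count : S → ℕ} {f : α → S}

theorem mem_typeClass : f ∈ typeClass α count ↔ ∀ z, #{i | f i = z} = count z := by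
  simp [typeClass]

theorem comp_perm_mem_typeClass (hf : f ∈ typeClass α count) (σ : Equiv.Perm α) :
    f ∘ σ ∈ typeClass α count := by
  rw [mem_typeClass] at hf ⊢
  intro z
  rw [← hf z, ← Fintype.card_subtype, ← Fintype.card_subtype]
  exact Fintype.card_congr (σ.subtypeEquiv fun _ ↦ Iff.rfl)

theorem multinomial_le_card_typeClass (hf : f ∈ typeClass α count) :
    Nat.multinomial univ count ≤ #(typeClass α count) := by
  rw [mem_typeClass] at hf
  -- Orbit–stabilizer: each fibre of `σ ↦ f ∘ σ` has the size `∏ z, (count z)!` of the stabilizer.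
  have horbit : (Fintype.card α)! ≤
      (∏ z, (count z)!) * #(univ.image fun σ : Equiv.Perm α ↦ f ∘ σ) := by
    rw [← Fintype.card_perm, ← Finset.card_univ]
    refine card_le_mul_card_image _ _ fun b hb ↦ ?_
    obtain ⟨τ, -, rfl⟩ := mem_image.1 hb
    rw [card_filter_comp_perm_eq, DomMulAct.stabilizer_card]
    simp [Fintype.card_subtype, hf]
  rw [← Finset.card_univ, card_eq_sum_card_fiberwise (f := f) fun _ _ ↦ mem_univ _] at horbit
  simp only [hf, ← Nat.multinomial_spec] at horbit
  refine (Nat.le_of_mul_le_mul_left horbit (by positivity)).trans (card_le_card ?_)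
  rintro _ hg
  obtain ⟨σ, -, rfl⟩ := mem_image.1 hg
  exact comp_perm_mem_typeClass (mem_typeClass.2 hf) σ

theorem sum_comp_of_mem_typeClass (hf : f ∈ typeClass α count) {M : Type*} [AddCommMonoid M]
    (L : S → M) : ∑ i, L (f i) = ∑ z, count z • L z := by
  rw [mem_typeClass] at hf
  calc ∑ i, L (f i) = ∑ z, ∑ i with f i = z, L (f i) := (sum_fiberwise _ _ _).symm
    _ = ∑ z, ∑ i with f i = z, L z :=
        sum_congr rfl fun z _ ↦ sum_congr rfl fun i hi ↦ by rw [(mem_filter.1 hi).2]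
    _ = ∑ z, count z • L z := by simp only [sum_const, hf]

end TypeClass

theorem Finset.card_le_card_pow_of_injOn_length {α β : Type*} [Fintype β] {s : Finset α}
    {enc : α → List β} {n : ℕ} (hinj : Set.InjOn enc s) (hlen : ∀ a ∈ s, (enc a).length = n) :
    #s ≤ Fintype.card β ^ n := by
  calc #s ≤ #((univ : Finset (List.Vector β n)).map
        ⟨List.Vector.toList, List.Vector.toList_injective⟩) :=
        card_le_card_of_injOn enc (fun a ha ↦ by simpa using ⟨⟨enc a, hlen a ha⟩, rfl⟩) hinj
    _ = Fintype.card β ^ n := by simp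

theorem Real.mul_sum_div_mul_logb_div {ι : Type*} (b : ℝ) (s : Finset ι) (c : ι → ℝ)
    (hc : ∀ i ∈ s, 0 ≤ c i) :
    (∑ i ∈ s, c i) * ∑ i ∈ s, c i / (∑ j ∈ s, c j) * logb b ((∑ j ∈ s, c j) / c i) =
      (∑ i ∈ s, c i) * logb b (∑ i ∈ s, c i) - ∑ i ∈ s, c i * logb b (c i) := by
  set n := ∑ i ∈ s, c i
  rcases eq_or_ne n 0 with hn | hn
  · have hzero : ∀ i ∈ s, c i = 0 := (sum_eq_zero_iff_of_nonneg hc).1 hn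
    rw [hn, zero_mul, zero_mul, zero_sub, zero_eq_neg]
    exact sum_eq_zero fun i hi ↦ by rw [hzero i hi, zero_mul]
  rw [mul_sum, sum_mul, ← sum_sub_distrib]
  refine sum_congr rfl fun i _ ↦ ?_
  rcases eq_or_ne (c i) 0 with hci | hci
  · simp [hci]
  · rw [logb_div hn hci]
    field_simp

theorem Real.logb_prod_natCast_pow_self {ι : Type*} (b : ℝ) (s : Finset ι) (c : ι → ℕ) :
    logb b (∏ i ∈ s, (c i : ℝ) ^ c i) = ∑ i ∈ s, c i * logb b (c i) := by
  rw [logb_prod _ _ fun i _ ↦ by exact_mod_cast Nat.pow_self_pos.ne']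
  simp only [logb_pow]

theorem Real.mul_logb_sub_le_of_pow_le {ι : Type*} (s : Finset ι) (c : ι → ℕ) {n A N : ℕ}
    (h : n ^ n ≤ A * (2 ^ N * ∏ i ∈ s, c i ^ c i)) :
    n * logb 2 n - ∑ i ∈ s, c i * logb 2 (c i) ≤ logb 2 A + N := by
  have hA : A ≠ 0 := by rintro rfl; simp at h
  have hprod : (∏ i ∈ s, (c i : ℝ) ^ c i) ≠ 0 :=
    prod_ne_zero_iff.2 fun i _ ↦ by exact_mod_cast Nat.pow_self_pos.ne'
  have hreal : (n : ℝ) ^ n ≤ A * (2 ^ N * ∏ i ∈ s, (c i : ℝ) ^ c i) := by exact_mod_cast h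
  have hlog := logb_le_logb_of_le one_lt_two (by exact_mod_cast Nat.pow_self_pos) hreal
  rw [logb_mul (by exact_mod_cast hA) (by positivity), logb_mul (by positivity) hprod,
    logb_prod_natCast_pow_self, logb_pow, logb_pow, logb_self_eq_one one_lt_two] at hlog
  linarith

theorem stmt8_general {S : Type*} [Fintype S] [DecidableEq S]
    (m : ℕ) (count : S → ℕ) (hcount : ∑ z, count z = m)
    (L : S → ℕ) (enc : (Fin m → S) → List Bool)
    (hlen : ∀ f : Fin m → S, (enc f).length = ∑ i, L (f i))
    (hinj : Set.InjOn enc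
      {f | ∀ z, (Finset.univ.filter (fun i => f i = z)).card = count z})
    (hex : ∃ f : Fin m → S,
      ∀ z, (Finset.univ.filter (fun i => f i = z)).card = count z) :
    (m : ℝ) * ∑ z, ((count z : ℝ) / m) * Real.logb 2 ((m : ℝ) / (count z))
        - (Fintype.card S : ℝ) * Real.logb 2 ((m : ℝ) + 1)
      ≤ ∑ z, (count z : ℝ) * (L z : ℝ) := by
  obtain ⟨f₀, hf₀⟩ := hex
  set N := ∑ z, count z * L z
  have hcode : #(typeClass (Fin m) count) ≤ 2 ^ N := by
    have hlenN : ∀ f ∈ typeClass (Fin m) count, (enc f).length = N := fun f hf ↦ by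
      simp only [hlen, sum_comp_of_mem_typeClass hf, smul_eq_mul, N]
    simpa using card_le_card_pow_of_injOn_length (by simpa [typeClass] using hinj) hlenN
  have htypes := Nat.sum_pow_sum_le_mul_multinomial count
  rw [hcount] at htypes
  have hnat : m ^ m ≤ (m + 1) ^ Fintype.card S * (2 ^ N * ∏ z, count z ^ count z) :=
    htypes.trans <| by
      gcongr
      exact (multinomial_le_card_typeClass (mem_typeClass.2 hf₀)).trans hcode
  have hlog := Real.mul_logb_sub_le_of_pow_le univ count hnat
  have hcast : ∑ z, (count z : ℝ) = m := by exact_mod_cast hcount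
  rw [← hcast, Real.mul_sum_div_mul_logb_div _ _ _ fun z _ ↦ Nat.cast_nonneg _, hcast]
  push_cast [Real.logb_pow, N] at hlog
  linarith

/-- Kraft-type converse for IL encoders on a single state pair: if an encoder assigns
to each arrangement of `m` items (with prescribed counts) a binary string whose length
is the sum of per-item codeword lengths, injectively on arrangements with those counts,
then the total code length is at least `m·H(p) − k·log₂(m+1)`. -/
theorem stmt8 {S : Type*} [Fintype S] [DecidableEq S]
    (m : ℕ) (hm : 0 < m) (count : S → ℕ) (hcount : ∑ z, count z = m)
    (L : S → ℕ) (enc : (Fin m → S) → List Bool)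
    (hlen : ∀ f : Fin m → S, (enc f).length = ∑ i, L (f i))
    (hinj : Set.InjOn enc
      {f | ∀ z, (Finset.univ.filter (fun i => f i = z)).card = count z})
    (hex : ∃ f : Fin m → S,
      ∀ z, (Finset.univ.filter (fun i => f i = z)).card = count z) :
    (m : ℝ) * ∑ z, ((count z : ℝ) / m) * Real.logb 2 ((m : ℝ) / (count z))
        - (Fintype.card S : ℝ) * Real.logb 2 ((m : ℝ) + 1)
      ≤ ∑ z, (count z : ℝ) * (L z : ℝ) :=
  stmt8_general m count hcount L enc hlen hinj hex
end
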